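/- arXiv:2508.17552 — 4 statements merged into one kernel-verified Lean document; each statement's English description precedes it below -/
import Mathlib

section
/- Let h : E → F be a homomorphism of semilattices with zero. Then the following are equivalent: (i) h is tight and the dual map ĥ : F̂_tight → Ê_tight, ĥ(ψ) = ψ ∘ h, is an order-isomorphism with respect to the spectral orders; (ii) h is a consonance. In this case ĥ is moreover a homeomorphism (hence an order-homeomorphism). -/
/-- A finite subset `C` is a cover for `f`: every `c ∈ C` satisfies `c ≤ f` and every
nonzero `g ≤ f` meets some `c ∈ C`. -/
def IsCover {E : Type*} [SemilatticeInf E] [OrderBot E] (C : Finset E) (f : E) : Prop :=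
  (∀ c ∈ C, c ≤ f) ∧ ∀ g : E, g ≠ ⊥ → g ≤ f → ∃ c ∈ C, g ⊓ c ≠ ⊥

/-- The (finite) family `{v i : i ∈ C}` is a cover for `f`. -/
def IsCoverFam {ι : Type*} {E : Type*} [SemilatticeInf E] [OrderBot E]
    (C : Finset ι) (v : ι → E) (f : E) : Prop :=
  (∀ i ∈ C, v i ≤ f) ∧ ∀ g : E, g ≠ ⊥ → g ≤ f → ∃ i ∈ C, g ⊓ v i ≠ ⊥

/-- A character on a semilattice with zero: a multiplicative `{0,1}`-valued map sending
`0` to `0` and not identically zero. -/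
def IsChar {E : Type*} [SemilatticeInf E] [OrderBot E] (φ : E → Bool) : Prop :=
  φ ⊥ = false ∧ (∀ e f : E, φ (e ⊓ f) = (φ e && φ f)) ∧ ∃ e : E, φ e = true

/-- A tight character: a character such that, for every `f` and every cover `C` for `f`,
`φ f = max_{c ∈ C} φ c`. -/
def IsTightChar {E : Type*} [SemilatticeInf E] [OrderBot E] (φ : E → Bool) : Prop :=
  IsChar φ ∧ ∀ f : E, ∀ C : Finset E, IsCover C f → (φ f = true ↔ ∃ c ∈ C, φ c = true)

/-- A filter on a semilattice with zero. -/
def IsFilterOn {E : Type*} [SemilatticeInf E] [OrderBot E] (ξ : Set E) : Prop :=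
  ξ.Nonempty ∧ ⊥ ∉ ξ ∧ (∀ e ∈ ξ, ∀ f ∈ ξ, e ⊓ f ∈ ξ) ∧ ∀ e ∈ ξ, ∀ f : E, e ≤ f → f ∈ ξ

/-- A tight filter: whenever `C` is a cover for some `f ∈ ξ`, some element of `C` lies in `ξ`. -/
def IsTightFilter {E : Type*} [SemilatticeInf E] [OrderBot E] (ξ : Set E) : Prop :=
  IsFilterOn ξ ∧ ∀ f ∈ ξ, ∀ C : Finset E, IsCover C f → ∃ c ∈ C, c ∈ ξ

/-- The tight order: `e` is tightly below `f` iff there is no nonzero `g ≤ e` with `g ⊓ f = ⊥`. -/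
def TightBelow {E : Type*} [SemilatticeInf E] [OrderBot E] (e f : E) : Prop :=
  ¬ ∃ g : E, g ≠ ⊥ ∧ g ≤ e ∧ g ⊓ f = ⊥

/-- Tight equivalence. -/
def TightEquiv {E : Type*} [SemilatticeInf E] [OrderBot E] (e f : E) : Prop :=
  TightBelow e f ∧ TightBelow f e

/-- A homomorphism is tightly injective if it reflects tight equivalence. -/
def TightlyInjective {E F : Type*} [SemilatticeInf E] [OrderBot E] [SemilatticeInf F] [OrderBot F]
    (h : E → F) : Prop :=
  ∀ e₁ e₂ : E, TightEquiv (h e₁) (h e₂) → TightEquiv e₁ e₂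

/-- A homomorphism is tightly surjective if its range is a large subset of the codomain:
for every `f` there is a finite `C ⊆ E` with `h e ≼ f` for all `e ∈ C` and
`{f ⊓ h e : e ∈ C}` a cover for `f`. -/
def TightlySurjective {E F : Type*} [SemilatticeInf E] [OrderBot E] [SemilatticeInf F] [OrderBot F]
    (h : E → F) : Prop :=
  ∀ f : F, ∃ C : Finset E, (∀ e ∈ C, TightBelow (h e) f) ∧ IsCoverFam C (fun e => f ⊓ h e) f

/-- A homomorphism of semilattices with zero is tight if it satisfies conditions
(4.1.ii) and (4.3.ii) of the paper. -/
def IsTightHom {E F : Type*} [SemilatticeInf E] [OrderBot E] [SemilatticeInf F] [OrderBot F]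
    (h : E → F) : Prop :=
  (∀ f : F, ∃ C : Finset E, IsCoverFam C (fun e => f ⊓ h e) f) ∧
  (∀ e : E, ∀ C : Finset E, IsCover C e → IsCoverFam C h (h e))

section Basic
set_option linter.unusedSectionVars false
variable {E : Type*} [SemilatticeInf E] [OrderBot E]

lemma tb_of_le {e f : E} (hef : e ≤ f) : TightBelow e f := by
  rintro ⟨g, hg, hge, hgf⟩
  exact hg (by rw [← hgf]; exact le_antisymm (le_inf le_rfl (hge.trans hef)) inf_le_left)

lemma tb_refl (e : E) : TightBelow e e := tb_of_le le_rfl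

lemma tb_mono_left {e' e f : E} (hle : e' ≤ e) (h : TightBelow e f) : TightBelow e' f := by
  rintro ⟨g, hg, hge, hgf⟩; exact h ⟨g, hg, hge.trans hle, hgf⟩

lemma tb_mono_right {e f f' : E} (h : TightBelow e f) (hle : f ≤ f') : TightBelow e f' := by
  rintro ⟨g, hg, hge, hgf⟩
  refine h ⟨g, hg, hge, le_bot_iff.1 ?_⟩
  rw [← hgf]; exact le_inf inf_le_left (inf_le_right.trans hle)

lemma tb_inf_right {a b : E} (h : TightBelow a b) : TightBelow a (a ⊓ b) := by
  rintro ⟨g, hg, hga, hgab⟩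
  refine h ⟨g, hg, hga, le_bot_iff.1 ?_⟩
  rw [← hgab]; exact le_inf inf_le_left (le_inf (inf_le_left.trans hga) inf_le_right)

lemma tb_ne_bot {a b : E} (h : TightBelow a b) (ha : a ≠ ⊥) : a ⊓ b ≠ ⊥ := by
  intro hab; exact h ⟨a, ha, le_rfl, hab⟩

lemma tb_bot_iff {e : E} : TightBelow e ⊥ ↔ e = ⊥ := by
  constructor
  · intro h; by_contra he; exact h ⟨e, he, le_rfl, inf_bot_eq e⟩
  · rintro rfl; exact tb_refl ⊥

lemma char_mono {φ : E → Bool} (hm : ∀ a b : E, φ (a ⊓ b) = (φ a && φ b))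
    {e f : E} (hef : e ≤ f) (he : φ e = true) : φ f = true := by
  have : φ (e ⊓ f) = (φ e && φ f) := hm e f
  rw [inf_eq_left.2 hef, he] at this
  simpa using this.symm

lemma cover_singleton {e f : E} (h : TightBelow e f) : IsCover ({e ⊓ f} : Finset E) e := by
  constructor
  · intro c hc; rw [Finset.mem_singleton] at hc; subst hc; exact inf_le_left
  · intro g hg hge
    refine ⟨e ⊓ f, Finset.mem_singleton_self _, fun hgc => h ⟨g, hg, hge, ?_⟩⟩
    rw [← hgc]
    exact le_antisymm (le_inf inf_le_left (le_inf (inf_le_left.trans hge) inf_le_right))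
      (le_inf inf_le_left (inf_le_right.trans inf_le_right))

lemma tight_tb {φ : E → Bool} (hφ : IsTightChar φ) {e f : E} (h : TightBelow e f)
    (he : φ e = true) : φ f = true := by
  obtain ⟨c, hc, hct⟩ := (hφ.2 e _ (cover_singleton h)).1 he
  rw [Finset.mem_singleton] at hc; subst hc
  exact char_mono hφ.1.2.1 inf_le_right hct

lemma coverFam_image {ι : Type*} [DecidableEq E] {C : Finset ι} {v : ι → E} {f : E}
    (h : IsCoverFam C v f) : IsCover (C.image v) f := by
  constructor
  · intro c hc
    obtain ⟨i, hi, rfl⟩ := Finset.mem_image.1 hc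
    exact h.1 i hi
  · intro g hg hgf
    obtain ⟨i, hi, hne⟩ := h.2 g hg hgf
    exact ⟨v i, Finset.mem_image_of_mem v hi, hne⟩

end Basic

section Filters
set_option linter.unusedSectionVars false
variable {E : Type*} [SemilatticeInf E] [OrderBot E]

lemma filt_lb {ξ : Set E} (hξ : IsFilterOn ξ) {w : E} (hw : w ∈ ξ)
    {ι : Type*} (S : Finset ι) (z : ι → E) (hz : ∀ i ∈ S, z i ∈ ξ) :
    ∃ y ∈ ξ, y ≤ w ∧ ∀ i ∈ S, y ≤ z i := by
  classical
  induction S using Finset.cons_induction with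
  | empty => exact ⟨w, hw, le_rfl, by simp⟩
  | cons a S ha ih =>
    obtain ⟨y, hy, hyw, hyz⟩ := ih (fun i hi => hz i (Finset.mem_cons_of_mem hi))
    refine ⟨y ⊓ z a, hξ.2.2.1 y hy (z a) (hz a (Finset.mem_cons_self a S)), inf_le_left.trans hyw, ?_⟩
    intro i hi
    rcases Finset.mem_cons.1 hi with rfl | hi
    · exact inf_le_right
    · exact inf_le_left.trans (hyz i hi)

lemma exists_maxfilter {x : E} (hx : x ≠ ⊥) :
    ∃ ξ : Set E, IsFilterOn ξ ∧ x ∈ ξ ∧ ∀ ζ : Set E, IsFilterOn ζ → ξ ⊆ ζ → ζ ⊆ ξ := by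
  have hup : IsFilterOn (Set.Ici x) ∧ x ∈ Set.Ici x := by
    refine ⟨⟨⟨x, le_rfl⟩, ?_, ?_, ?_⟩, le_rfl⟩
    · intro hb; exact hx (le_bot_iff.1 hb)
    · intro e he f hf; exact le_inf he hf
    · intro e he f hef; exact he.trans hef
  have hZ : ∀ c ⊆ {ξ : Set E | IsFilterOn ξ ∧ x ∈ ξ}, IsChain (fun x1 x2 => x1 ⊆ x2) c →
      c.Nonempty → ∃ ub ∈ {ξ : Set E | IsFilterOn ξ ∧ x ∈ ξ}, ∀ s ∈ c, s ⊆ ub := by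
    intro c hcS hchain hcne
    obtain ⟨ξ₀, hξ₀⟩ := hcne
    refine ⟨⋃₀ c, ⟨⟨⟨x, Set.mem_sUnion.2 ⟨ξ₀, hξ₀, (hcS hξ₀).2⟩⟩, ?_, ?_, ?_⟩,
        Set.mem_sUnion.2 ⟨ξ₀, hξ₀, (hcS hξ₀).2⟩⟩, fun s hs => Set.subset_sUnion_of_mem hs⟩
    · rintro ⟨ξ, hξ, hbot⟩; exact (hcS hξ).1.2.1 hbot
    · rintro e ⟨ξ₁, hξ₁, he⟩ f ⟨ξ₂, hξ₂, hf⟩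
      rcases hchain.total hξ₁ hξ₂ with hle | hle
      · exact ⟨ξ₂, hξ₂, (hcS hξ₂).1.2.2.1 e (hle he) f hf⟩
      · exact ⟨ξ₁, hξ₁, (hcS hξ₁).1.2.2.1 e he f (hle hf)⟩
    · rintro e ⟨ξ₁, hξ₁, he⟩ f hef
      exact ⟨ξ₁, hξ₁, (hcS hξ₁).1.2.2.2 e he f hef⟩
  obtain ⟨m, -, hm⟩ := zorn_subset_nonempty {ξ : Set E | IsFilterOn ξ ∧ x ∈ ξ} hZ _ hup
  exact ⟨m, hm.1.1, hm.1.2, fun ζ hζ hsub => hm.2 ⟨hζ, hsub hm.1.2⟩ hsub⟩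

lemma max_mem_iff {ξ : Set E} (hξ : IsFilterOn ξ)
    (hmax : ∀ ζ : Set E, IsFilterOn ζ → ξ ⊆ ζ → ζ ⊆ ξ) (y : E) :
    y ∈ ξ ↔ ∀ z ∈ ξ, y ⊓ z ≠ ⊥ := by
  constructor
  · intro hy z hz hbot
    exact hξ.2.1 (hbot ▸ hξ.2.2.1 y hy z hz)
  · intro hmeet
    set ζ : Set E := {w | ∃ z ∈ ξ, y ⊓ z ≤ w} with hζdef
    have hζ : IsFilterOn ζ := by
      obtain ⟨z₀, hz₀⟩ := hξ.1
      refine ⟨⟨y ⊓ z₀, z₀, hz₀, le_rfl⟩, ?_, ?_, ?_⟩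
      · rintro ⟨z, hz, hle⟩
        exact hmeet z hz (le_bot_iff.1 hle)
      · rintro e ⟨z₁, hz₁, h₁⟩ f ⟨z₂, hz₂, h₂⟩
        refine ⟨z₁ ⊓ z₂, hξ.2.2.1 z₁ hz₁ z₂ hz₂, le_inf ?_ ?_⟩
        · exact le_trans (le_inf inf_le_left (inf_le_right.trans inf_le_left)) h₁
        · exact le_trans (le_inf inf_le_left (inf_le_right.trans inf_le_right)) h₂
      · rintro e ⟨z, hz, hle⟩ f hef
        exact ⟨z, hz, hle.trans hef⟩
    have hsub : ξ ⊆ ζ := fun z hz => ⟨z, hz, inf_le_right⟩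
    obtain ⟨z₀, hz₀⟩ := hξ.1
    exact hmax ζ hζ hsub ⟨z₀, hz₀, inf_le_left⟩

lemma max_tight {ξ : Set E} (hξ : IsFilterOn ξ)
    (hmax : ∀ ζ : Set E, IsFilterOn ζ → ξ ⊆ ζ → ζ ⊆ ξ) : IsTightFilter ξ := by
  classical
  refine ⟨hξ, fun f hf C hC => ?_⟩
  by_contra hno
  push_neg at hno
  have hz : ∀ c ∈ C, ∃ z ∈ ξ, c ⊓ z = ⊥ := by
    intro c hc
    have := hno c hc
    rw [max_mem_iff hξ hmax] at this
    push_neg at this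
    obtain ⟨z, hz, hb⟩ := this
    exact ⟨z, hz, hb⟩
  choose z hzmem hzbot using hz
  -- take a lower bound in ξ of f and all the chosen z's
  obtain ⟨y, hy, hyf, hyz⟩ := filt_lb hξ hf C.attach (fun c => z c.1 c.2)
    (fun i _ => hzmem i.1 i.2)
  have hyne : y ≠ ⊥ := fun hb => hξ.2.1 (hb ▸ hy)
  obtain ⟨c, hc, hne⟩ := hC.2 y hyne hyf
  refine hne (le_bot_iff.1 ?_)
  calc y ⊓ c ≤ z c hc ⊓ c := inf_le_inf_right c (hyz ⟨c, hc⟩ (Finset.mem_attach _ _))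
  _ = ⊥ := by rw [inf_comm]; exact hzbot c hc

open Classical in
lemma tf_char {ξ : Set E} (hξ : IsTightFilter ξ) :
    IsTightChar (fun e => decide (e ∈ ξ)) := by
  constructor
  · refine ⟨by simp [hξ.1.2.1], ?_, ?_⟩
    · intro e f
      have hiff : (e ⊓ f ∈ ξ) ↔ (e ∈ ξ ∧ f ∈ ξ) :=
        ⟨fun hm => ⟨hξ.1.2.2.2 _ hm e inf_le_left, hξ.1.2.2.2 _ hm f inf_le_right⟩,
         fun hef => hξ.1.2.2.1 e hef.1 f hef.2⟩
      show decide (e ⊓ f ∈ ξ) = (decide (e ∈ ξ) && decide (f ∈ ξ))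
      rw [show ((e ⊓ f ∈ ξ) = (e ∈ ξ ∧ f ∈ ξ)) from propext hiff, Bool.decide_and]
    · obtain ⟨e, he⟩ := hξ.1.1; exact ⟨e, by simp [he]⟩
  · intro f C hC
    simp only [decide_eq_true_eq]
    constructor
    · intro hf; exact hξ.2 f hf C hC
    · rintro ⟨c, hc, hcξ⟩
      exact hξ.1.2.2.2 c hcξ f (hC.1 c hc)

open Classical in
lemma exists_char {x : E} (hx : x ≠ ⊥) :
    ∃ φ : E → Bool, IsTightChar φ ∧ φ x = true ∧ ∀ y : E, x ⊓ y = ⊥ → φ y = false := by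
  obtain ⟨ξ, hξ, hxξ, hmax⟩ := exists_maxfilter hx
  refine ⟨fun e => decide (e ∈ ξ), tf_char (max_tight hξ hmax), by simp [hxξ], ?_⟩
  intro y hy
  simp only [decide_eq_false_iff_not]
  intro hyξ
  exact hξ.2.1 (hy ▸ hξ.2.2.1 x hxξ y hyξ)

lemma tb_of_chars {e f : E}
    (h : ∀ φ : E → Bool, IsTightChar φ → φ e = true → φ f = true) : TightBelow e f := by
  rintro ⟨g, hg, hge, hgf⟩
  obtain ⟨φ, hφ, hgt, hdisj⟩ := exists_char hg
  have he : φ e = true := char_mono hφ.1.2.1 hge hgt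
  have hf : φ f = true := h φ hφ he
  rw [hdisj f hgf] at hf
  exact Bool.false_ne_true hf

end Filters

section Topology
set_option linter.unusedSectionVars false
variable {E : Type*} [SemilatticeInf E] [OrderBot E]

lemma bfalse {b : Bool} (h : ¬ b = true) : b = false := by
  cases b
  · rfl
  · exact absurd rfl h

/-- A "weak tight character": all conditions of a tight character except nontriviality. -/
def WeakTight (φ : E → Bool) : Prop :=
  φ ⊥ = false ∧ (∀ e f : E, φ (e ⊓ f) = (φ e && φ f)) ∧
    ∀ f : E, ∀ C : Finset E, IsCover C f → (φ f = true ↔ ∃ c ∈ C, φ c = true)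

lemma tightChar_iff_weakTight {φ : E → Bool} :
    IsTightChar φ ↔ WeakTight φ ∧ ∃ e : E, φ e = true := by
  constructor
  · rintro ⟨⟨h1, h2, h3⟩, h4⟩; exact ⟨⟨h1, h2, h4⟩, h3⟩
  · rintro ⟨⟨h1, h2, h4⟩, h3⟩; exact ⟨⟨h1, h2, h3⟩, h4⟩

lemma isOpen_coord (x : E) (b : Bool) : IsOpen {φ : E → Bool | φ x = b} := by
  have h : {φ : E → Bool | φ x = b} = (fun φ : E → Bool => φ x) ⁻¹' ({b} : Set Bool) := rfl
  rw [h]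
  exact (continuous_apply x).isOpen_preimage _ (isOpen_discrete _)

lemma isClosed_coord (x : E) (b : Bool) : IsClosed {φ : E → Bool | φ x = b} :=
  isClosed_eq (continuous_apply x) continuous_const

lemma isClosed_iffSet (f : E) (C : Finset E) :
    IsClosed {φ : E → Bool | φ f = true ↔ ∃ c ∈ C, φ c = true} := by
  have hset : {φ : E → Bool | φ f = true ↔ ∃ c ∈ C, φ c = true} =
      ({φ : E → Bool | φ f = false} ∩ ⋂ c ∈ (C : Set E), {φ : E → Bool | φ c = false}) ∪
      ⋃ c ∈ (C : Set E), ({φ : E → Bool | φ f = true} ∩ {φ : E → Bool | φ c = true}) := by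
    ext φ
    simp only [Set.mem_setOf_eq, Set.mem_union, Set.mem_inter_iff, Set.mem_iInter,
      Set.mem_iUnion, Finset.mem_coe]
    constructor
    · intro hiff
      by_cases hf : φ f = true
      · obtain ⟨c, hc, hct⟩ := hiff.1 hf
        exact Or.inr ⟨c, hc, hf, hct⟩
      · refine Or.inl ⟨bfalse hf, fun c hc => ?_⟩
        refine bfalse fun hct => hf (hiff.2 ⟨c, hc, hct⟩)
    · rintro (⟨h1, hall⟩ | ⟨c, hc, h1, hct⟩)
      · constructor
        · intro hft; rw [h1] at hft; exact absurd hft (by simp)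
        · rintro ⟨c, hc, hct⟩; rw [hall c hc] at hct; exact absurd hct (by simp)
      · exact ⟨fun _ => ⟨c, hc, hct⟩, fun _ => h1⟩
  rw [hset]
  refine IsClosed.union (IsClosed.inter (isClosed_coord f false) ?_) ?_
  · exact isClosed_biInter fun c _ => isClosed_coord c false
  · exact (C.finite_toSet).isClosed_biUnion fun c _ =>
      IsClosed.inter (isClosed_coord f true) (isClosed_coord c true)

lemma continuous_and_apply (e f : E) : Continuous fun φ : E → Bool => (φ e && φ f) := by
  have hand : Continuous fun p : Bool × Bool => p.1 && p.2 := by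
    exact continuous_of_discreteTopology
  have hp : Continuous fun φ : E → Bool => ((φ e, φ f) : Bool × Bool) :=
    (continuous_apply e).prodMk (continuous_apply f)
  exact hand.comp hp

lemma isClosed_weakTight : IsClosed {φ : E → Bool | WeakTight φ} := by
  have hset : {φ : E → Bool | WeakTight φ} =
      {φ : E → Bool | φ ⊥ = false} ∩
      (⋂ e : E, ⋂ f : E, {φ : E → Bool | φ (e ⊓ f) = (φ e && φ f)}) ∩
      ⋂ f : E, ⋂ C : Finset E, ⋂ (_ : IsCover C f),
        {φ : E → Bool | φ f = true ↔ ∃ c ∈ C, φ c = true} := by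
    ext φ
    simp only [Set.mem_setOf_eq, Set.mem_inter_iff, Set.mem_iInter, WeakTight]
    tauto
  rw [hset]
  refine IsClosed.inter (IsClosed.inter (isClosed_coord ⊥ false) ?_) ?_
  · exact isClosed_iInter fun e => isClosed_iInter fun f =>
      isClosed_eq (continuous_apply _) (continuous_and_apply e f)
  · exact isClosed_iInter fun f => isClosed_iInter fun C => isClosed_iInter fun hC =>
      isClosed_iffSet f C

end Topology

section TbInf
set_option linter.unusedSectionVars false
variable {E : Type*} [SemilatticeInf E] [OrderBot E]

lemma eq_bot_of_le_eq {a b : E} (hab : a ≤ b) (hb : b = ⊥) : a = ⊥ :=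
  le_bot_iff.1 (hb ▸ hab)

lemma tb_inf {a b c : E} (h1 : TightBelow a b) (h2 : TightBelow a c) :
    TightBelow a (b ⊓ c) := by
  rintro ⟨g, hg, hga, hgbc⟩
  have hgb : g ⊓ b ≠ ⊥ := fun hb => h1 ⟨g, hg, hga, hb⟩
  refine h2 ⟨g ⊓ b, hgb, inf_le_left.trans hga, eq_bot_of_le_eq ?_ hgbc⟩
  exact le_inf (inf_le_left.trans inf_le_left)
    (le_inf (inf_le_left.trans inf_le_right) inf_le_right)
end TbInf

section Hom
set_option linter.unusedSectionVars false
variable {E F : Type*} [SemilatticeInf E] [OrderBot E] [SemilatticeInf F] [OrderBot F]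
variable {h : E → F}

lemma hmono (hinf : ∀ a b : E, h (a ⊓ b) = h a ⊓ h b) {a b : E} (hab : a ≤ b) :
    h a ≤ h b := by
  have heq : h a = h a ⊓ h b := by rw [← hinf, inf_eq_left.2 hab]
  rw [heq]; exact inf_le_right

lemma inj_at_zero (h0 : h ⊥ = ⊥) (hti : TightlyInjective h) :
    ∀ x : E, h x = ⊥ → x = ⊥ := by
  intro x hx
  have hte : TightEquiv (h x) (h ⊥) := by
    rw [hx, h0]; exact ⟨tb_refl ⊥, tb_refl ⊥⟩
  exact tb_bot_iff.1 (hti x ⊥ hte).1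

/-- Pullback of a tight character along a tight homomorphism is a tight character. -/
lemma pullback_tight (h0 : h ⊥ = ⊥) (hinf : ∀ a b : E, h (a ⊓ b) = h a ⊓ h b)
    (hth : IsTightHom h) {ψ : F → Bool} (hψ : IsTightChar ψ) :
    IsTightChar (fun e => ψ (h e)) := by
  classical
  refine ⟨⟨by simp [h0, hψ.1.1], fun e f => by simp [hinf, hψ.1.2.1], ?_⟩, ?_⟩
  · obtain ⟨f₀, hf₀⟩ := hψ.1.2.2
    obtain ⟨C₀, hC₀⟩ := hth.1 f₀
    obtain ⟨x, hx, hxt⟩ := (hψ.2 f₀ (C₀.image fun e => f₀ ⊓ h e) (coverFam_image hC₀)).1 hf₀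
    obtain ⟨e₀, he₀, rfl⟩ := Finset.mem_image.1 hx
    exact ⟨e₀, char_mono hψ.1.2.1 inf_le_right hxt⟩
  · intro e C hC
    have himg : IsCover (C.image h) (h e) := coverFam_image (hth.2 e C hC)
    rw [hψ.2 (h e) (C.image h) himg]
    constructor
    · rintro ⟨x, hx, hxt⟩
      obtain ⟨c, hc, rfl⟩ := Finset.mem_image.1 hx
      exact ⟨c, hc, hxt⟩
    · rintro ⟨c, hc, hct⟩
      exact ⟨h c, Finset.mem_image_of_mem h hc, hct⟩

/-- A cover of `f` by elements `f ⊓ h c` pulls back along any `e` with `h e`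
tightly below `f` to a cover of `e`. -/
lemma refine_cover [DecidableEq E] (h0 : h ⊥ = ⊥)
    (hinf : ∀ a b : E, h (a ⊓ b) = h a ⊓ h b)
    (hz0 : ∀ x : E, h x = ⊥ → x = ⊥) {e : E} {f : F} (hef : TightBelow (h e) f)
    {C : Finset E} (hC : IsCoverFam C (fun c => f ⊓ h c) f) :
    IsCover (C.image fun c => e ⊓ c) e := by
  constructor
  · intro x hx
    obtain ⟨c, hc, rfl⟩ := Finset.mem_image.1 hx
    exact inf_le_left
  · intro g hg hge
    by_contra hno
    push_neg at hno
    have hall : ∀ c ∈ C, h g ⊓ h c = ⊥ := by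
      intro c hc
      have hx := hno (e ⊓ c) (Finset.mem_image_of_mem _ hc)
      rw [← inf_assoc, inf_eq_left.2 hge] at hx
      rw [← hinf, hx, h0]
    have hgbot : h g ≠ ⊥ := fun hb => hg (hz0 g hb)
    have hm : h g ⊓ f ≠ ⊥ := tb_ne_bot (tb_mono_left (hmono hinf hge) hef) hgbot
    obtain ⟨c, hc, hne⟩ := hC.2 (h g ⊓ f) hm inf_le_right
    refine hne (eq_bot_of_le_eq ?_ (hall c hc))
    exact le_inf (inf_le_left.trans inf_le_left) (inf_le_right.trans inf_le_right)

/-- For a tight character, membership of `f` is detected on the elements of a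
tightly-surjective cover of `f`. -/
lemma psi_true_iff {f : F} {C : Finset E} (hCtb : ∀ e ∈ C, TightBelow (h e) f)
    (hCcov : IsCoverFam C (fun e => f ⊓ h e) f) {ψ : F → Bool} (hψ : IsTightChar ψ) :
    (ψ f = true ↔ ∃ c ∈ C, ψ (h c) = true) := by
  classical
  constructor
  · intro hf
    obtain ⟨x, hx, hxt⟩ := (hψ.2 f _ (coverFam_image hCcov)).1 hf
    obtain ⟨c, hc, rfl⟩ := Finset.mem_image.1 hx
    exact ⟨c, hc, char_mono hψ.1.2.1 inf_le_right hxt⟩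
  · rintro ⟨c, hc, hct⟩
    exact tight_tb hψ (hCtb c hc) hct

/-- Order reflection of the dual map, from tight surjectivity. -/
lemma stepC (hts : TightlySurjective h) {ψ₁ ψ₂ : F → Bool}
    (h1 : IsTightChar ψ₁) (h2 : IsTightChar ψ₂) :
    (∀ f : F, ψ₁ f ≤ ψ₂ f) ↔ ∀ e : E, ψ₁ (h e) ≤ ψ₂ (h e) := by
  constructor
  · intro hall e; exact hall (h e)
  · intro hh f
    rw [Bool.le_iff_imp]
    intro hf1
    obtain ⟨C, hCtb, hCcov⟩ := hts f
    obtain ⟨c, hc, hct⟩ := (psi_true_iff hCtb hCcov h1).1 hf1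
    exact (psi_true_iff hCtb hCcov h2).2 ⟨c, hc, Bool.le_iff_imp.1 (hh c) hct⟩

/-- A consonance is a tight homomorphism. -/
lemma stepA (h0 : h ⊥ = ⊥) (hinf : ∀ a b : E, h (a ⊓ b) = h a ⊓ h b)
    (hti : TightlyInjective h) (hts : TightlySurjective h) : IsTightHom h := by
  have hz0 := inj_at_zero h0 hti
  constructor
  · intro f; obtain ⟨C, -, hC⟩ := hts f; exact ⟨C, hC⟩
  · intro e C hC
    constructor
    · intro c hc; exact hmono hinf (hC.1 c hc)
    · intro g hg hge
      by_contra hno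
      push_neg at hno
      obtain ⟨D, hD1, hD2⟩ := hts g
      obtain ⟨d, hd, hned⟩ := hD2.2 g hg le_rfl
      have hgd : g ⊓ h d ≠ ⊥ := fun hb => hned (eq_bot_of_le_eq inf_le_right hb)
      have hdc : ∀ c ∈ C, d ⊓ c = ⊥ := by
        intro c hc
        apply hz0
        rw [hinf]
        by_contra hne
        refine hD1 d hd ⟨h d ⊓ h c, hne, inf_le_left, ?_⟩
        refine eq_bot_of_le_eq ?_ (hno c hc)
        exact le_inf inf_le_right (inf_le_left.trans inf_le_right)
      have hde : d ⊓ e ≠ ⊥ := by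
        intro hb
        apply hgd
        have hbb : h d ⊓ h e = ⊥ := by rw [← hinf, hb, h0]
        refine eq_bot_of_le_eq ?_ hbb
        exact le_inf inf_le_right (inf_le_left.trans hge)
      obtain ⟨c, hc, hnec⟩ := hC.2 (d ⊓ e) hde inf_le_right
      refine hnec (eq_bot_of_le_eq ?_ (hdc c hc))
      exact le_inf (inf_le_left.trans inf_le_left) inf_le_right

open Classical in
/-- The canonical extension of a tight character along a consonance. -/
noncomputable def psiB (h : E → F) (φ : E → Bool) : F → Bool :=
  fun f => decide (∃ e : E, φ e = true ∧ TightBelow (h e) f)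

open Classical in
lemma psiB_true_iff (φ : E → Bool) (f : F) :
    psiB h φ f = true ↔ ∃ e : E, φ e = true ∧ TightBelow (h e) f := by
  simp [psiB]

/-- Surjectivity of the dual map for a consonance. -/
lemma stepB (h0 : h ⊥ = ⊥) (hinf : ∀ a b : E, h (a ⊓ b) = h a ⊓ h b)
    (hti : TightlyInjective h) (hts : TightlySurjective h) {φ : E → Bool}
    (hφ : IsTightChar φ) :
    IsTightChar (psiB h φ) ∧ (fun e => psiB h φ (h e)) = φ := by
  classical
  have hz0 := inj_at_zero h0 hti
  have heq : ∀ e₀ : E, psiB h φ (h e₀) = φ e₀ := by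
    intro e₀
    by_cases hp : φ e₀ = true
    · rw [hp]
      exact (psiB_true_iff φ (h e₀)).2 ⟨e₀, hp, tb_refl _⟩
    · rw [bfalse hp]
      rw [Bool.eq_false_iff]
      intro hmem
      obtain ⟨e, he, htb⟩ := (psiB_true_iff φ (h e₀)).1 hmem
      have hte : TightEquiv (h e) (h (e ⊓ e₀)) := by
        constructor
        · rw [hinf]; exact tb_inf_right htb
        · exact tb_of_le (hmono hinf inf_le_left)
      have h1 : TightBelow e (e ⊓ e₀) := (hti e (e ⊓ e₀) hte).1
      have h2 : φ (e ⊓ e₀) = true := tight_tb hφ h1 he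
      exact hp (char_mono hφ.1.2.1 inf_le_right h2)
  refine ⟨⟨⟨?_, ?_, ?_⟩, ?_⟩, funext heq⟩
  · -- psiB ⊥ = false
    rw [Bool.eq_false_iff]
    intro hmem
    obtain ⟨e, he, htb⟩ := (psiB_true_iff φ ⊥).1 hmem
    have : e = ⊥ := hz0 e (tb_bot_iff.1 htb)
    rw [this, hφ.1.1] at he
    exact Bool.false_ne_true he
  · -- multiplicative
    intro f₁ f₂
    show decide _ = (decide _ && decide _)
    rw [← Bool.decide_and]
    apply decide_eq_decide.mpr
    constructor
    · rintro ⟨e, he, htb⟩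
      exact ⟨⟨e, he, tb_mono_right htb inf_le_left⟩, ⟨e, he, tb_mono_right htb inf_le_right⟩⟩
    · rintro ⟨⟨e₁, he₁, h1⟩, ⟨e₂, he₂, h2⟩⟩
      set e := e₁ ⊓ e₂ with hedef
      have φe : φ e = true := by rw [hedef, hφ.1.2.1, he₁, he₂]; rfl
      have htbe : TightBelow (h e) (f₁ ⊓ f₂) :=
        tb_inf (tb_mono_left (hmono hinf inf_le_left) h1)
          (tb_mono_left (hmono hinf inf_le_right) h2)
      obtain ⟨C, hCtb, hCcov⟩ := hts (f₁ ⊓ f₂)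
      have hcov := refine_cover h0 hinf hz0 htbe hCcov
      obtain ⟨x, hx, hxt⟩ := (hφ.2 e _ hcov).1 φe
      obtain ⟨c, hc, rfl⟩ := Finset.mem_image.1 hx
      exact ⟨e ⊓ c, hxt, tb_mono_left (hmono hinf inf_le_right) (hCtb c hc)⟩
  · -- nontrivial
    obtain ⟨e₀, he₀⟩ := hφ.1.2.2
    exact ⟨h e₀, (psiB_true_iff φ (h e₀)).2 ⟨e₀, he₀, tb_refl _⟩⟩
  · -- tightness
    intro f C' hC'
    constructor
    · intro hmem
      obtain ⟨e, he, htb⟩ := (psiB_true_iff φ f).1 hmem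
      choose D hD1 hD2 using hts
      set T : Finset E := C'.biUnion (fun c => (D c).image (fun d => e ⊓ d)) with hT
      have hcovT : IsCover T e := by
        constructor
        · intro x hx
          obtain ⟨c, -, hx2⟩ := Finset.mem_biUnion.1 hx
          obtain ⟨d, -, rfl⟩ := Finset.mem_image.1 hx2
          exact inf_le_left
        · intro g hg hge
          by_contra hno
          push_neg at hno
          have hall : ∀ c ∈ C', ∀ d ∈ D c, h g ⊓ h d = ⊥ := by
            intro c hc d hd
            have hx := hno (e ⊓ d)
              (Finset.mem_biUnion.2 ⟨c, hc, Finset.mem_image_of_mem _ hd⟩)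
            rw [← inf_assoc, inf_eq_left.2 hge] at hx
            rw [← hinf, hx, h0]
          have hgbot : h g ≠ ⊥ := fun hb => hg (hz0 g hb)
          have hm : h g ⊓ f ≠ ⊥ := tb_ne_bot (tb_mono_left (hmono hinf hge) htb) hgbot
          obtain ⟨c, hc, hnec⟩ := hC'.2 (h g ⊓ f) hm inf_le_right
          obtain ⟨d, hd, hned⟩ := (hD2 c).2 ((h g ⊓ f) ⊓ c) hnec inf_le_right
          refine hned (eq_bot_of_le_eq ?_ (hall c hc d hd))
          exact le_inf (inf_le_left.trans (inf_le_left.trans inf_le_left))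
            (inf_le_right.trans inf_le_right)
      obtain ⟨x, hx, hxt⟩ := (hφ.2 e T hcovT).1 he
      obtain ⟨c, hc, hx2⟩ := Finset.mem_biUnion.1 hx
      obtain ⟨d, hd, rfl⟩ := Finset.mem_image.1 hx2
      refine ⟨c, hc, (psiB_true_iff φ c).2 ⟨e ⊓ d, hxt, ?_⟩⟩
      exact tb_mono_left (hmono hinf inf_le_right) (hD1 c d hd)
    · rintro ⟨c, hc, hct⟩
      obtain ⟨e, he, htb⟩ := (psiB_true_iff φ c).1 hct
      exact (psiB_true_iff φ f).2 ⟨e, he, tb_mono_right htb (hC'.1 c hc)⟩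

end Hom

section Main
set_option linter.unusedSectionVars false
set_option maxHeartbeats 1000000
variable {E F : Type*} [SemilatticeInf E] [OrderBot E] [SemilatticeInf F] [OrderBot F]
variable {h : E → F}

/-- Key consequence of order reflection: a tight character containing `f` must contain
`h e` for some `e` with `h e` tightly below `f`. -/
lemma crux (h0 : h ⊥ = ⊥) (hinf : ∀ a b : E, h (a ⊓ b) = h a ⊓ h b)
    (hth : IsTightHom h)
    (hrefl : ∀ ψ₁ ψ₂ : F → Bool, IsTightChar ψ₁ → IsTightChar ψ₂ →
      ((∀ f : F, ψ₁ f ≤ ψ₂ f) ↔ ∀ e : E, ψ₁ (h e) ≤ ψ₂ (h e)))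
    {f : F} {ψ : F → Bool} (hψ : IsTightChar ψ) (hf : ψ f = true) :
    ∃ e : E, TightBelow (h e) f ∧ ψ (h e) = true := by
  classical
  by_contra hno
  push_neg at hno
  have hξfil : IsFilterOn {e : E | ψ (h e) = true} := by
    refine ⟨?_, ?_, ?_, ?_⟩
    · obtain ⟨C₀, hC₀⟩ := hth.1 f
      obtain ⟨x, hx, hxt⟩ := (hψ.2 f _ (coverFam_image hC₀)).1 hf
      obtain ⟨e₀, he₀, rfl⟩ := Finset.mem_image.1 hx
      exact ⟨e₀, char_mono hψ.1.2.1 inf_le_right hxt⟩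
    · show ¬ ψ (h ⊥) = true
      rw [h0, hψ.1.1]; exact Bool.false_ne_true
    · intro a ha b hb
      show ψ (h (a ⊓ b)) = true
      rw [hinf, hψ.1.2.1, ha, hb]; rfl
    · intro a ha b hab
      exact char_mono hψ.1.2.1 (hmono hinf hab) ha
  have hk : ∀ e : E, ψ (h e) = true → ∃ k : F, k ≠ ⊥ ∧ k ≤ h e ∧ k ⊓ f = ⊥ := by
    intro e he
    have hnt : ¬ TightBelow (h e) f := fun htb => hno e htb he
    exact not_not.1 hnt
  set s : Set (F → Bool) := {ψ' | WeakTight ψ'} ∩ {ψ' | ψ' f = false} with hsdef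
  have hscomp : IsCompact s := (isClosed_weakTight.inter (isClosed_coord f false)).isCompact
  set t : {e : E // ψ (h e) = true} → Set (F → Bool) :=
    fun i => {ψ' | ψ' (h i.1) = true} with htdef
  have htcl : ∀ i, IsClosed (t i) := fun i => isClosed_coord _ true
  have hfinne : ∀ u : Finset {e : E // ψ (h e) = true}, (s ∩ ⋂ i ∈ u, t i).Nonempty := by
    intro u
    obtain ⟨e₀, he₀⟩ := hξfil.1
    obtain ⟨y, hy, hyw, hyz⟩ := filt_lb hξfil he₀ u (fun i => i.1) (fun i _ => i.2)
    obtain ⟨k, hk1, hk2, hk3⟩ := hk y hy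
    obtain ⟨φ', hφ', hφk, hφd⟩ := exists_char hk1
    refine ⟨φ', ⟨(tightChar_iff_weakTight.1 hφ').1, hφd f hk3⟩, ?_⟩
    simp only [Set.mem_iInter]
    intro i hi
    exact char_mono hφ'.1.2.1 (hk2.trans (hmono hinf (hyz i hi))) hφk
  have hfull : (s ∩ ⋂ i, t i).Nonempty := by
    rcases (s ∩ ⋂ i, t i).eq_empty_or_nonempty with hemp | hne2
    · obtain ⟨u, hu⟩ := hscomp.elim_finite_subfamily_closed t htcl hemp
      obtain ⟨x, hx⟩ := hfinne u
      rw [hu] at hx; exact absurd hx (Set.notMem_empty x)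
    · exact hne2
  obtain ⟨ψs, ⟨hψsw, hψsf⟩, hψst⟩ := hfull
  obtain ⟨e₀, he₀⟩ := hξfil.1
  have hψstight : IsTightChar ψs :=
    tightChar_iff_weakTight.2 ⟨hψsw, h e₀, Set.mem_iInter.1 hψst ⟨e₀, he₀⟩⟩
  have hle : ∀ e : E, ψ (h e) ≤ ψs (h e) := by
    intro e
    rw [Bool.le_iff_imp]
    intro hee
    exact Set.mem_iInter.1 hψst ⟨e, hee⟩
  have hff := (hrefl ψ ψs hψ hψstight).2 hle f
  rw [hf, hψsf] at hff
  exact (by decide : ¬ ((true : Bool) ≤ false)) hff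

lemma surj_of_i (h0 : h ⊥ = ⊥) (hinf : ∀ a b : E, h (a ⊓ b) = h a ⊓ h b)
    (hth : IsTightHom h)
    (hrefl : ∀ ψ₁ ψ₂ : F → Bool, IsTightChar ψ₁ → IsTightChar ψ₂ →
      ((∀ f : F, ψ₁ f ≤ ψ₂ f) ↔ ∀ e : E, ψ₁ (h e) ≤ ψ₂ (h e))) :
    TightlySurjective h := by
  classical
  intro f
  set K : Set (F → Bool) := {ψ | WeakTight ψ} ∩ {ψ | ψ f = true} with hKdef
  have hK : IsCompact K := (isClosed_weakTight.inter (isClosed_coord f true)).isCompact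
  set U : {e : E // TightBelow (h e) f} → Set (F → Bool) :=
    fun i => {ψ | ψ (h i.1) = true} with hUdef
  have hUopen : ∀ i, IsOpen (U i) := fun i => isOpen_coord _ true
  have hcov : K ⊆ ⋃ i, U i := by
    rintro ψ ⟨hw, hft⟩
    have hψt : IsTightChar ψ := tightChar_iff_weakTight.2 ⟨hw, f, hft⟩
    obtain ⟨e, htb, het⟩ := crux h0 hinf hth hrefl hψt hft
    exact Set.mem_iUnion.2 ⟨⟨e, htb⟩, het⟩
  obtain ⟨u, hu⟩ := hK.elim_finite_subcover U hUopen hcov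
  refine ⟨u.image (fun i => i.1), ?_, ?_, ?_⟩
  · intro e he
    obtain ⟨i, hi, rfl⟩ := Finset.mem_image.1 he
    exact i.2
  · intro e he; exact inf_le_left
  · intro g hg hgf
    obtain ⟨φ', hφ', hφg, -⟩ := exists_char hg
    have hφf : φ' f = true := char_mono hφ'.1.2.1 hgf hφg
    have hmem : φ' ∈ ⋃ i ∈ u, U i := hu ⟨(tightChar_iff_weakTight.1 hφ').1, hφf⟩
    simp only [Set.mem_iUnion] at hmem
    obtain ⟨i, hiu, hival⟩ := hmem
    refine ⟨i.1, Finset.mem_image_of_mem _ hiu, ?_⟩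
    intro hb
    have hval : φ' (g ⊓ (f ⊓ h i.1)) = true := by
      rw [hφ'.1.2.1, hφ'.1.2.1, hφg, hφf, hival]; rfl
    rw [hb, hφ'.1.1] at hval
    exact Bool.false_ne_true hval

lemma inj_of_i
    (hdsurj : ∀ φ : E → Bool, IsTightChar φ →
      ∃ ψ : F → Bool, IsTightChar ψ ∧ (fun e => ψ (h e)) = φ) :
    TightlyInjective h := by
  rintro e₁ e₂ ⟨h12, h21⟩
  constructor
  · apply tb_of_chars
    intro φ hφ h1
    obtain ⟨ψ, hψ, hcomp⟩ := hdsurj φ hφ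
    have h1' : ψ (h e₁) = true := by
      rw [show ψ (h e₁) = φ e₁ from congrFun hcomp e₁]; exact h1
    have h2' := tight_tb hψ h12 h1'
    rw [show ψ (h e₂) = φ e₂ from congrFun hcomp e₂] at h2'; exact h2'
  · apply tb_of_chars
    intro φ hφ h2
    obtain ⟨ψ, hψ, hcomp⟩ := hdsurj φ hφ
    have h2' : ψ (h e₂) = true := by
      rw [show ψ (h e₂) = φ e₂ from congrFun hcomp e₂]; exact h2
    have h1' := tight_tb hψ h21 h2'
    rw [show ψ (h e₁) = φ e₁ from congrFun hcomp e₁] at h1'; exact h1'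

end Main


/-- For a homomorphism `h : E → F` of semilattices with zero, the
following are equivalent: (i) `h` is tight and the dual map `ĥ ψ = ψ ∘ h` is an
order-isomorphism of the tight spectra with their spectral (pointwise) orders (i.e. `ĥ`
is surjective and `ψ₁ ≤ ψ₂ ↔ ĥ ψ₁ ≤ ĥ ψ₂`, which forces injectivity); (ii) `h` is a
consonance (tightly injective and tightly surjective). In this case `ĥ` is moreover a
homeomorphism of the tight spectra. -/
theorem consonance_iff_dual_orderIso {E F : Type*} [SemilatticeInf E] [OrderBot E]
    [SemilatticeInf F] [OrderBot F]
    (h : E → F) (h0 : h ⊥ = ⊥) (hinf : ∀ a b : E, h (a ⊓ b) = h a ⊓ h b) :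
    ((IsTightHom h ∧
        (∀ φ : E → Bool, IsTightChar φ →
          ∃ ψ : F → Bool, IsTightChar ψ ∧ (fun e => ψ (h e)) = φ) ∧
        (∀ ψ₁ ψ₂ : F → Bool, IsTightChar ψ₁ → IsTightChar ψ₂ →
          ((∀ f : F, ψ₁ f ≤ ψ₂ f) ↔ ∀ e : E, ψ₁ (h e) ≤ ψ₂ (h e)))) ↔
      (TightlyInjective h ∧ TightlySurjective h)) ∧
    (TightlyInjective h ∧ TightlySurjective h →
      ∃ hmap : ∀ ψ : {ψ : F → Bool // IsTightChar ψ}, IsTightChar (fun e => ψ.1 (h e)),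
        IsHomeomorph (fun ψ : {ψ : F → Bool // IsTightChar ψ} =>
          (⟨fun e => ψ.1 (h e), hmap ψ⟩ : {φ : E → Bool // IsTightChar φ}))) := by
  classical
  constructor
  · constructor
    · rintro ⟨hth, hdsurj, hrefl⟩
      exact ⟨inj_of_i hdsurj, surj_of_i h0 hinf hth hrefl⟩
    · rintro ⟨hti, hts⟩
      refine ⟨stepA h0 hinf hti hts, ?_, ?_⟩
      · intro φ hφ
        obtain ⟨ht, heqn⟩ := stepB h0 hinf hti hts hφ
        exact ⟨psiB h φ, ht, heqn⟩
      · intro ψ₁ ψ₂ h1 h2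
        exact stepC hts h1 h2
  · rintro ⟨hti, hts⟩
    have hth := stepA h0 hinf hti hts
    refine ⟨fun ψ => pullback_tight h0 hinf hth ψ.2, ?_⟩
    let Θ : {ψ : F → Bool // IsTightChar ψ} → {φ : E → Bool // IsTightChar φ} :=
      fun ψ => ⟨fun e => ψ.1 (h e), pullback_tight h0 hinf hth ψ.2⟩
    show IsHomeomorph Θ
    let Θ' : {φ : E → Bool // IsTightChar φ} → {ψ : F → Bool // IsTightChar ψ} :=
      fun φ => ⟨psiB h φ.1, (stepB h0 hinf hti hts φ.2).1⟩
    have hright : ∀ φ, Θ (Θ' φ) = φ := by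
      intro φ
      apply Subtype.ext
      exact (stepB h0 hinf hti hts φ.2).2
    have hinj : Function.Injective Θ := by
      intro ψ₁ ψ₂ hψeq
      apply Subtype.ext
      have hcomp : ∀ e, ψ₁.1 (h e) = ψ₂.1 (h e) := fun e =>
        congrFun (congrArg Subtype.val hψeq) e
      funext f
      apply le_antisymm
      · exact (stepC hts ψ₁.2 ψ₂.2).2 (fun e => le_of_eq (hcomp e)) f
      · exact (stepC hts ψ₂.2 ψ₁.2).2 (fun e => le_of_eq (hcomp e).symm) f
    have hleft : ∀ ψ, Θ' (Θ ψ) = ψ := fun ψ => hinj (hright (Θ ψ))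
    have hcontF : Continuous Θ := by
      apply Continuous.subtype_mk
      exact continuous_pi fun e => (continuous_apply (h e)).comp continuous_subtype_val
    have hcontI : Continuous Θ' := by
      apply Continuous.subtype_mk
      apply continuous_pi
      intro f
      obtain ⟨C, hCtb, hCcov⟩ := hts f
      have hfun : (fun φ : {φ : E → Bool // IsTightChar φ} => psiB h φ.1 f) =
          fun φ => decide (∃ c ∈ C, φ.1 c = true) := by
        funext φ
        obtain ⟨hBt, hBeq⟩ := stepB h0 hinf hti hts φ.2
        have hiff := psi_true_iff hCtb hCcov hBt
        show decide _ = decide _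
        refine decide_eq_decide.mpr ?_
        rw [← psiB_true_iff, hiff]
        constructor <;> rintro ⟨c, hc, hct⟩ <;> refine ⟨c, hc, ?_⟩
        · rw [← congrFun hBeq c]; exact hct
        · rw [congrFun hBeq c]; exact hct
      rw [hfun]
      apply continuous_discrete_rng.mpr
      intro b
      cases b
      · have hpre : (fun φ : {φ : E → Bool // IsTightChar φ} =>
            decide (∃ c ∈ C, φ.1 c = true)) ⁻¹' {false} =
            ⋂ c ∈ (C : Set E), {φ : {φ : E → Bool // IsTightChar φ} | φ.1 c = false} := by
          ext φ
          simp only [Set.mem_preimage, Set.mem_singleton_iff, decide_eq_false_iff_not,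
            Set.mem_iInter, Set.mem_setOf_eq, Finset.mem_coe, not_exists]
          constructor
          · intro hno c hc
            exact bfalse fun hct => hno c ⟨hc, hct⟩
          · rintro hall c ⟨hc, hct⟩
            rw [hall c hc] at hct; exact Bool.false_ne_true hct
        rw [hpre]
        exact (C.finite_toSet).isOpen_biInter fun c _ =>
          (isOpen_coord c false).preimage continuous_subtype_val
      · have hpre : (fun φ : {φ : E → Bool // IsTightChar φ} =>
            decide (∃ c ∈ C, φ.1 c = true)) ⁻¹' {true} =
            ⋃ c ∈ (C : Set E), {φ : {φ : E → Bool // IsTightChar φ} | φ.1 c = true} := by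
          ext φ
          simp only [Set.mem_preimage, Set.mem_singleton_iff, decide_eq_true_eq,
            Set.mem_iUnion, Set.mem_setOf_eq, Finset.mem_coe]
          constructor
          · rintro ⟨c, hc, hct⟩; exact ⟨c, hc, hct⟩
          · rintro ⟨c, hc, hct⟩; exact ⟨c, hc, hct⟩
        rw [hpre]
        exact isOpen_biUnion fun c _ =>
          (isOpen_coord c true).preimage continuous_subtype_val
    exact (Homeomorph.mk ⟨Θ, Θ', hleft, hright⟩ hcontF hcontI).isHomeomorph
end

section
/- Let X be a tight-like space and let U and V be compact open up-sets of X with V ⊊ U. Then there exists a nonempty compact open up-set W of X with W ⊆ U \ V. -/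
/-- A tight-like space: a locally compact Hausdorff space with a partial order such that
(a) every point lies in a compact open up-set, (b) whenever `¬ x ≤ y` there is a compact
open up-set containing `x` but not `y`, and (c) the maximal elements are dense. -/
structure IsTightLikeSpace (X : Type*) [TopologicalSpace X] [PartialOrder X] : Prop where
  locallyCompact : LocallyCompactSpace X
  t2 : T2Space X
  exists_mem_upSet : ∀ x : X, ∃ U : Set X, IsCompact U ∧ IsOpen U ∧ IsUpperSet U ∧ x ∈ U
  separating : ∀ x y : X, ¬ x ≤ y →
    ∃ U : Set X, IsCompact U ∧ IsOpen U ∧ IsUpperSet U ∧ x ∈ U ∧ y ∉ U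
  dense_maximal : Dense {x : X | IsMax x}

/-- In a tight-like space, if `U` and `V` are compact open up-sets with
`V ⊊ U`, then there is a nonempty compact open up-set `W ⊆ U \ V`. -/
theorem exists_upSet_in_diff {X : Type*} [TopologicalSpace X] [PartialOrder X]
    (hX : IsTightLikeSpace X) (U V : Set X)
    (hUc : IsCompact U) (hUo : IsOpen U) (hUu : IsUpperSet U)
    (hVc : IsCompact V) (hVo : IsOpen V) (hVu : IsUpperSet V)
    (hVU : V ⊂ U) :
    ∃ W : Set X, W.Nonempty ∧ IsCompact W ∧ IsOpen W ∧ IsUpperSet W ∧ W ⊆ U \ V := by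
  haveI := hX.t2
  -- U \ V is nonempty open; pick a maximal element x in it
  have hdiff_open : IsOpen (U \ V) := hUo.sdiff hVc.isClosed
  have hdiff_ne : (U \ V).Nonempty := by
    obtain ⟨x, hxU, hxV⟩ := Set.exists_of_ssubset hVU
    exact ⟨x, hxU, hxV⟩
  obtain ⟨x, hxmax, hxU, hxV⟩ := hX.dense_maximal.exists_mem_open hdiff_open hdiff_ne
  -- for each y ∈ V, ¬ x ≤ y
  have key : ∀ y ∈ V, ¬ x ≤ y := by
    intro y hy hxy
    exact hxV (hVu (le_antisymm (hxmax hxy) hxy ▸ le_rfl) hy)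
  choose A hAc hAo hAu hAx hAy using fun y (hy : y ∈ V) => hX.separating x y (key y hy)
  -- V is covered by complements of the A y
  have hcover : V ⊆ ⋃ y : V, (A y y.2)ᶜ := by
    intro z hz
    exact Set.mem_iUnion.2 ⟨⟨z, hz⟩, hAy z hz⟩
  obtain ⟨t, ht⟩ := hVc.elim_finite_subcover (fun y : V => (A y y.2)ᶜ)
    (fun y => (hAc y y.2).isClosed.isOpen_compl) hcover
  refine ⟨U ∩ ⋂ y ∈ t, A y y.2, ⟨x, hxU, Set.mem_biInter fun y _ => hAx y y.2⟩, ?_, ?_, ?_, ?_⟩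
  · exact hUc.inter_right (isClosed_biInter fun y _ => (hAc y y.2).isClosed)
  · exact hUo.inter (isOpen_biInter_finset fun y _ => hAo y y.2)
  · intro a b hab ⟨haU, haA⟩
    exact ⟨hUu hab haU, Set.mem_biInter fun y hy => hAu y y.2 hab (Set.mem_iInter₂.1 haA y hy)⟩
  · rintro z ⟨hzU, hzA⟩
    refine ⟨hzU, fun hzV => ?_⟩
    obtain ⟨y, hyt, hyc⟩ := Set.mem_iUnion₂.1 (ht hzV)
    exact hyc (Set.mem_iInter₂.1 hzA y hyt)
end

section
/- Let X be a tight-like space and let 𝓔 be the semilattice of all compact open up-sets of X (meet given by intersection, with ∅ as zero). Let U, U₁, …, U_n ∈ 𝓔 with U_i ⊆ U for every i. Then {U₁, …, U_n} is a cover for U in the semilattice sense if and only if U = U₁ ∪ ⋯ ∪ U_n. -/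
/-- Let `X` be a tight-like space and let `𝓔` be the semilattice of
compact open up-sets of `X`. If `U, U₁, …, Uₙ ∈ 𝓔` with each `Uᵢ ⊆ U`, then
`{U₁, …, Uₙ}` is a cover for `U` in the semilattice sense (each member is contained in
`U` and every nonempty member of `𝓔` contained in `U` meets some member) if and only
if `U = U₁ ∪ ⋯ ∪ Uₙ`. -/
theorem cover_iff_union {X : Type*} [TopologicalSpace X] [PartialOrder X]
    (hX : IsTightLikeSpace X) (U : Set X)
    (hUc : IsCompact U) (hUo : IsOpen U) (hUu : IsUpperSet U)
    (C : Finset (Set X)) (hC : ∀ W ∈ C, IsCompact W ∧ IsOpen W ∧ IsUpperSet W)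
    (hsub : ∀ W ∈ C, W ⊆ U) :
    ((∀ W ∈ C, W ⊆ U) ∧
      ∀ V : Set X, IsCompact V → IsOpen V → IsUpperSet V → V.Nonempty → V ⊆ U →
        ∃ W ∈ C, (V ∩ W).Nonempty) ↔
    U = ⋃ W ∈ C, W := by
  classical
  haveI := hX.t2
  constructor
  · rintro ⟨-, hcov⟩
    set K : Set X := ⋃ W ∈ C, W with hKdef
    have hKc : IsCompact K := C.finite_toSet.isCompact_biUnion (fun W hW => (hC W hW).1)
    have hKU : K ⊆ U := Set.iUnion₂_subset hsub
    refine Set.Subset.antisymm ?_ hKU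
    intro x hx
    by_contra hxK
    -- find a maximal element in the open set U \ K
    have hopen : IsOpen (U \ K) := hUo.sdiff hKc.isClosed
    obtain ⟨m, hmMax, hmU, hmK⟩ :
        ∃ m, IsMax m ∧ m ∈ U ∧ m ∉ K := by
      obtain ⟨m, hm1, hm2⟩ := hX.dense_maximal.exists_mem_open hopen ⟨x, hx, hxK⟩
      exact ⟨m, hm1, hm2.1, hm2.2⟩
    obtain ⟨V₀, hV₀c, hV₀o, hV₀u, hmV₀⟩ := hX.exists_mem_upSet m
    set K' : Set X := K ∪ (V₀ \ U) with hK'def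
    have hK'c : IsCompact K' := hKc.union (hV₀c.inter_right hUo.isClosed_compl)
    have hnle : ∀ y ∈ K', ¬ m ≤ y := by
      intro y hy hle
      have : y = m := le_antisymm (hmMax hle) hle
      subst this
      rcases hy with hy | hy
      · exact hmK hy
      · exact hy.2 hmU
    have hS : ∀ y : X, ∃ S : Set X,
        IsCompact S ∧ IsOpen S ∧ IsUpperSet S ∧ m ∈ S ∧ (y ∈ K' → y ∉ S) := by
      intro y
      by_cases hy : y ∈ K'
      · obtain ⟨S, h1, h2, h3, h4, h5⟩ := hX.separating m y (hnle y hy)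
        exact ⟨S, h1, h2, h3, h4, fun _ => h5⟩
      · exact ⟨V₀, hV₀c, hV₀o, hV₀u, hmV₀, fun h => absurd h hy⟩
    choose S hSc hSo hSu hmS hSnot using hS
    have hcover : K' ⊆ ⋃ y : X, (S y)ᶜ := by
      intro z hz
      exact Set.mem_iUnion.2 ⟨z, hSnot z hz⟩
    obtain ⟨t, ht⟩ := hK'c.elim_finite_subcover (fun y => (S y)ᶜ)
      (fun y => (hSc y).isClosed.isOpen_compl) hcover
    set V : Set X := V₀ ∩ ⋂ y ∈ t, S y with hVdef
    have hVc : IsCompact V :=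
      hV₀c.inter_right (isClosed_biInter fun y _ => (hSc y).isClosed)
    have hVo : IsOpen V := hV₀o.inter (isOpen_biInter_finset fun y _ => hSo y)
    have hVu : IsUpperSet V := by
      intro a b hab ⟨ha0, haI⟩
      refine ⟨hV₀u hab ha0, ?_⟩
      simp only [Set.mem_iInter] at haI ⊢
      exact fun y hy => (hSu y) hab (haI y hy)
    have hmV : m ∈ V := ⟨hmV₀, Set.mem_iInter₂.2 fun y _ => hmS y⟩
    have hVK' : ∀ z ∈ V, z ∉ K' := by
      intro z hzV hzK'
      obtain ⟨y, hyt, hzy⟩ := Set.mem_iUnion₂.1 (ht hzK')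
      exact hzy (Set.mem_iInter₂.1 hzV.2 y hyt)
    have hVU : V ⊆ U := by
      intro z hz
      by_contra hzU
      exact hVK' z hz (Or.inr ⟨hz.1, hzU⟩)
    obtain ⟨W, hWC, z, hzV, hzW⟩ := hcov V hVc hVo hVu ⟨m, hmV⟩ hVU
    exact hVK' z hzV (Or.inl (Set.mem_biUnion hWC hzW))
  · intro hU
    refine ⟨hsub, ?_⟩
    rintro V _ _ _ ⟨v, hv⟩ hVU
    have hvU := hVU hv
    rw [hU] at hvU
    obtain ⟨W, hW, hvW⟩ := Set.mem_iUnion₂.1 hvU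
    exact ⟨W, hW, v, hv, hvW⟩
end

section
/- Let X be a tight-like space and let 𝓔 be the semilattice of all compact open up-sets of X (meet given by intersection, with ∅ as zero). Then the map φ : X → 𝓔̂_tight sending x to ξ_x = {V ∈ 𝓔 : x ∈ V} is well defined (each ξ_x is a tight filter on 𝓔) and is an order-homeomorphism from X onto the tight spectrum 𝓔̂_tight. In particular, every tight-like space is order-homeomorphic to the tight spectrum of a semilattice with zero. -/
/-- The tight spectrum of a semilattice with zero, in the filter model: the set of all
tight filters, ordered by inclusion (the spectral order) and topologized via
characteristic functions as a subspace of the product `E → Bool` (`Bool` discrete). -/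
structure TightFilters (E : Type*) [SemilatticeInf E] [OrderBot E] where
  carrier : Set E
  tight : IsTightFilter carrier

/-- The spectral order on tight filters: inclusion. -/
instance {E : Type*} [SemilatticeInf E] [OrderBot E] : PartialOrder (TightFilters E) :=
  PartialOrder.lift TightFilters.carrier (fun a b h => by cases a; cases b; congr)

open Classical in
/-- The topology on tight filters, induced by characteristic functions from the product
topology on `E → Bool` (`Bool` discrete). -/
noncomputable instance {E : Type*} [SemilatticeInf E] [OrderBot E] :
    TopologicalSpace (TightFilters E) :=
  TopologicalSpace.induced
    (fun ξ : TightFilters E => (fun e => decide (e ∈ ξ.carrier) : E → Bool)) inferInstance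

/-- The collection `𝓔` of compact open up-sets of `X`. -/
abbrev KUO (X : Type*) [TopologicalSpace X] [PartialOrder X] :=
  {U : Set X // IsCompact U ∧ IsOpen U ∧ IsUpperSet U}

/-- `𝓔` is a meet-semilattice under intersection. -/
instance {X : Type*} [TopologicalSpace X] [PartialOrder X] [T2Space X] :
    SemilatticeInf (KUO X) :=
  { (inferInstance : PartialOrder (KUO X)) with
    inf := fun U V =>
      ⟨U.1 ∩ V.1, U.2.1.inter V.2.1, U.2.2.1.inter V.2.2.1, U.2.2.2.inter V.2.2.2⟩
    inf_le_left := fun _ _ => Set.inter_subset_left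
    inf_le_right := fun _ _ => Set.inter_subset_right
    le_inf := fun _ _ _ h1 h2 => Set.subset_inter h1 h2 }

/-- The empty set is the zero of `𝓔`. -/
instance {X : Type*} [TopologicalSpace X] [PartialOrder X] : OrderBot (KUO X) :=
  { bot := ⟨∅, isCompact_empty, isOpen_empty, isUpperSet_empty⟩
    bot_le := fun _ => Set.empty_subset _ }

/-!
The compact open up-sets separate the points of `X` in its order, so `x ≤ y` iff `ξ_x ⊆ ξ_y`.
Maximal points have neighbourhood bases of compact open up-sets; as they are dense, a cover of
`f ∈ 𝓔` in the semilattice sense covers `f` as a set, which makes every `ξ_x` tight.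
Conversely, a tight filter `ξ` is `ξ_x` for some point `x` of the compact set `⋂ ξ`: otherwise
the compact open up-sets outside `ξ` would cover `⋂ ξ`, hence finitely many of them would cover
a member of `ξ`, against tightness. Finally `x ↦ ξ_x` is continuous because the sets of `𝓔` are
clopen, and open because it maps each compact `U ∈ 𝓔` injectively onto the open set
`{ξ | U ∈ ξ}` of a Hausdorff space.
-/

open Function

theorem IsOpenMap.of_isCompact_isOpen_image {X Y : Type*} [TopologicalSpace X]
    [TopologicalSpace Y] [T2Space Y] {f : X → Y} (hf : Continuous f) (hinj : Injective f)
    (hcov : ∀ x, ∃ U, IsCompact U ∧ IsOpen (f '' U) ∧ x ∈ U) : IsOpenMap f := by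
  intro W hW
  refine isOpen_iff_forall_mem_open.2 ?_
  rintro _ ⟨x, hxW, rfl⟩
  obtain ⟨U, hU, hfU, hxU⟩ := hcov x
  refine ⟨f '' U \ f '' (U \ W), ?_, hfU.sdiff ((hU.diff hW).image hf).isClosed,
    ⟨⟨x, hxU, rfl⟩, ?_⟩⟩
  · rintro _ ⟨⟨u, huU, rfl⟩, hu⟩
    by_contra huW
    exact hu ⟨u, ⟨huU, fun huW' => huW ⟨u, huW', rfl⟩⟩, rfl⟩
  · rintro ⟨u, ⟨-, huW⟩, hux⟩
    exact huW (hinj hux ▸ hxW)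

theorem continuous_decide_mem {X : Type*} [TopologicalSpace X] {s : Set X}
    [DecidablePred (· ∈ s)] (hs : IsClopen s) : Continuous fun x => decide (x ∈ s) := by
  rw [continuous_bool_rng true]
  simpa [Set.preimage] using hs

namespace TightFilters

variable {E : Type*} [SemilatticeInf E] [OrderBot E]

theorem carrier_injective : Injective (carrier : TightFilters E → Set E) := by
  rintro ⟨_, _⟩ ⟨_, _⟩ rfl
  rfl

open Classical in
theorem continuous_decide_mem_carrier :
    Continuous fun ξ : TightFilters E => fun e => decide (e ∈ ξ.carrier) :=
  continuous_induced_dom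

theorem isOpen_setOf_mem_carrier (e : E) : IsOpen {ξ : TightFilters E | e ∈ ξ.carrier} := by
  classical
  have := (continuous_bool_rng true).1 ((continuous_apply e).comp continuous_decide_mem_carrier)
  simpa [Set.preimage] using this.isOpen

instance : T2Space (TightFilters E) := by
  classical
  refine T2Space.of_injective_continuous ?_ continuous_decide_mem_carrier
  intro ξ η h
  refine carrier_injective (Set.ext fun e => ?_)
  simpa using congrFun h e

end TightFilters

section CompactOpenUpSets

variable {X : Type*} [TopologicalSpace X] [PartialOrder X]

theorem KUO.ne_bot_iff {V : KUO X} : V ≠ ⊥ ↔ V.1.Nonempty := by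
  rw [Set.nonempty_iff_ne_empty, Ne, Ne, ← Subtype.val_inj]
  rfl

/-- The filter `ξ_x`. -/
def pointFilter (x : X) : Set (KUO X) := {V | x ∈ V.1}

theorem biInter_pointFilter (hX : IsTightLikeSpace X) (x : X) :
    ⋂ V ∈ pointFilter x, V.1 = Set.Ici x := by
  refine Set.Subset.antisymm (fun y hy => ?_) fun y hxy =>
    Set.mem_iInter₂.2 fun V hV => V.2.2.2 hxy hV
  by_contra hxy
  obtain ⟨U, hc, ho, hu, hxU, hyU⟩ := hX.separating x y hxy
  exact hyU (Set.mem_iInter₂.1 hy ⟨U, hc, ho, hu⟩ hxU)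

theorem pointFilter_subset_pointFilter (hX : IsTightLikeSpace X) {x y : X} :
    pointFilter x ⊆ pointFilter y ↔ x ≤ y := by
  rw [← Set.mem_Ici (x := y), ← biInter_pointFilter hX, Set.mem_iInter₂]
  rfl

theorem exists_mem_subset_of_biInter_subset [T2Space X] {F : Set (KUO X)}
    (hne : F.Nonempty) (hinf : ∀ U ∈ F, ∀ V ∈ F, U ⊓ V ∈ F) {O : Set X} (hO : IsOpen O)
    (hFO : ⋂ V ∈ F, V.1 ⊆ O) : ∃ V ∈ F, V.1 ⊆ O := by
  obtain ⟨U, hU⟩ := hne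
  have : Nonempty F := ⟨⟨U, hU⟩⟩
  obtain ⟨V, hV⟩ := (U.2.1.diff hO).elim_directed_family_closed (fun V : F => V.1.1)
    (fun V => V.1.2.1.isClosed)
    (Set.eq_empty_iff_forall_notMem.2 fun z ⟨⟨_, hzO⟩, hz⟩ =>
      hzO (hFO (Set.mem_iInter₂.2 fun V hV => Set.mem_iInter.1 hz ⟨V, hV⟩)))
    fun V W => ⟨⟨V.1 ⊓ W.1, hinf _ V.2 _ W.2⟩, Set.inter_subset_left, Set.inter_subset_right⟩
  refine ⟨U ⊓ V, hinf U hU V V.2, fun z hz => ?_⟩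
  by_contra hzO
  exact Set.eq_empty_iff_forall_notMem.1 hV z ⟨⟨hz.1, hzO⟩, hz.2⟩

theorem isFilterOn_pointFilter [T2Space X] (hX : IsTightLikeSpace X) (x : X) :
    IsFilterOn (pointFilter x) := by
  refine ⟨?_, id, fun _ he _ hf => ⟨he, hf⟩, fun _ he _ hef => hef he⟩
  obtain ⟨U, hc, ho, hu, hx⟩ := hX.exists_mem_upSet x
  exact ⟨⟨U, hc, ho, hu⟩, hx⟩

theorem exists_mem_subset_of_isMax [T2Space X] (hX : IsTightLikeSpace X) {m : X}
    (hm : IsMax m) {O : Set X} (hO : IsOpen O) (hmO : m ∈ O) :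
    ∃ V : KUO X, m ∈ V.1 ∧ V.1 ⊆ O := by
  have hF := isFilterOn_pointFilter hX m
  refine exists_mem_subset_of_biInter_subset hF.1 hF.2.2.1 hO ?_
  rw [biInter_pointFilter hX]
  intro y hy
  rwa [← hm.eq_of_le hy]

theorem subset_biUnion_of_isCover [T2Space X] (hX : IsTightLikeSpace X) {C : Finset (KUO X)}
    {f : KUO X} (hC : IsCover C f) : f.1 ⊆ ⋃ c ∈ C, c.1 := by
  by_contra hfC
  have hO : IsOpen (f.1 \ ⋃ c ∈ C, c.1) :=
    f.2.2.1.sdiff (C.finite_toSet.isClosed_biUnion fun c _ => c.2.1.isClosed)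
  obtain ⟨m, hm, hmO⟩ := hX.dense_maximal.exists_mem_open hO (Set.sdiff_nonempty.2 hfC)
  obtain ⟨g, hmg, hgO⟩ := exists_mem_subset_of_isMax hX hm hO hmO
  obtain ⟨c, hc, hgc⟩ := hC.2 g (KUO.ne_bot_iff.2 ⟨m, hmg⟩) fun z hz => (hgO hz).1
  obtain ⟨z, hzg, hzc⟩ := KUO.ne_bot_iff.1 hgc
  exact (hgO hzg).2 (Set.mem_biUnion hc hzc)

theorem isCover_of_subset_biUnion [T2Space X] {C : Finset (KUO X)} {f : KUO X}
    (hCf : ∀ c ∈ C, c ≤ f) (hfC : f.1 ⊆ ⋃ c ∈ C, c.1) : IsCover C f := by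
  refine ⟨hCf, fun g hg hgf => ?_⟩
  obtain ⟨z, hz⟩ := KUO.ne_bot_iff.1 hg
  obtain ⟨c, hc, hzc⟩ := Set.mem_iUnion₂.1 (hfC (hgf hz))
  exact ⟨c, hc, KUO.ne_bot_iff.2 ⟨z, hz, hzc⟩⟩

theorem isTightFilter_pointFilter [T2Space X] (hX : IsTightLikeSpace X) (x : X) :
    IsTightFilter (pointFilter x) :=
  ⟨isFilterOn_pointFilter hX x, fun _ hf _ hC =>
    let ⟨c, hc, hxc⟩ := Set.mem_iUnion₂.1 (subset_biUnion_of_isCover hX hC hf)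
    ⟨c, hc, hxc⟩⟩

theorem IsTightFilter.exists_mem_of_subset_biUnion [T2Space X] {ξ : Set (KUO X)}
    (hξ : IsTightFilter ξ) {f : KUO X} (hf : f ∈ ξ) {ι : Type*} (T : Finset ι)
    (D : ι → KUO X) (hfD : f.1 ⊆ ⋃ i ∈ T, (D i).1) : ∃ i ∈ T, D i ∈ ξ := by
  classical
  have hcover : IsCover (T.image (f ⊓ D ·)) f := by
    refine isCover_of_subset_biUnion (by simp) fun z hz => ?_
    obtain ⟨i, hi, hzi⟩ := Set.mem_iUnion₂.1 (hfD hz)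
    exact Set.mem_biUnion (Finset.mem_image_of_mem _ hi) ⟨hz, hzi⟩
  obtain ⟨_, hc, hcξ⟩ := hξ.2 f hf _ hcover
  obtain ⟨i, hi, rfl⟩ := Finset.mem_image.1 hc
  exact ⟨i, hi, hξ.1.2.2.2 _ hcξ _ inf_le_right⟩

theorem IsTightFilter.exists_pointFilter_eq [T2Space X] {ξ : Set (KUO X)}
    (hξ : IsTightFilter ξ) : ∃ x, pointFilter x = ξ := by
  set K := ⋂ V ∈ ξ, V.1
  suffices ∃ x ∈ K, pointFilter x ⊆ ξ by
    obtain ⟨x, hxK, hxξ⟩ := this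
    exact ⟨x, hxξ.antisymm fun V hV => Set.mem_iInter₂.1 hxK V hV⟩
  by_contra! hK
  choose D hxD hDξ using fun x : K => Set.not_subset.1 (hK x x.2)
  obtain ⟨f₀, hf₀⟩ := hξ.1.1
  have hKc : IsCompact K := f₀.2.1.of_isClosed_subset
    (isClosed_biInter fun V _ => V.2.1.isClosed) (Set.biInter_subset_of_mem hf₀)
  obtain ⟨T, hKT⟩ := hKc.elim_finite_subcover (fun x : K => (D x).1) (fun x => (D x).2.2.1)
    fun x hx => Set.mem_iUnion.2 ⟨⟨x, hx⟩, hxD _⟩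
  obtain ⟨f, hfξ, hfT⟩ := exists_mem_subset_of_biInter_subset ⟨f₀, hf₀⟩ hξ.1.2.2.1
    (isOpen_biUnion fun x _ => (D x).2.2.1) hKT
  obtain ⟨x, -, hx⟩ := hξ.exists_mem_of_subset_biUnion hfξ T D hfT
  exact hDξ x hx

end CompactOpenUpSets

namespace IsTightLikeSpace

variable {X : Type*} [TopologicalSpace X] [PartialOrder X] [T2Space X]

def toTightFilters (hX : IsTightLikeSpace X) (x : X) : TightFilters (KUO X) :=
  ⟨pointFilter x, isTightFilter_pointFilter hX x⟩

theorem toTightFilters_le_iff (hX : IsTightLikeSpace X) {x y : X} :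
    hX.toTightFilters x ≤ hX.toTightFilters y ↔ x ≤ y :=
  pointFilter_subset_pointFilter hX

theorem toTightFilters_injective (hX : IsTightLikeSpace X) : Injective hX.toTightFilters :=
  fun _ _ h => le_antisymm (hX.toTightFilters_le_iff.1 h.le) (hX.toTightFilters_le_iff.1 h.ge)

theorem toTightFilters_surjective (hX : IsTightLikeSpace X) : Surjective hX.toTightFilters :=
  fun ξ => let ⟨x, hx⟩ := ξ.tight.exists_pointFilter_eq; ⟨x, TightFilters.carrier_injective hx⟩

open Classical in
theorem continuous_toTightFilters (hX : IsTightLikeSpace X) : Continuous hX.toTightFilters :=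
  continuous_induced_rng.2 <| continuous_pi fun V => continuous_decide_mem ⟨V.2.1.isClosed, V.2.2.1⟩

theorem image_toTightFilters (hX : IsTightLikeSpace X) (U : KUO X) :
    hX.toTightFilters '' U.1 = {ξ | U ∈ ξ.carrier} := by
  refine Set.Subset.antisymm (Set.image_subset_iff.2 fun _ hx => hx) fun ξ hξ => ?_
  obtain ⟨x, rfl⟩ := hX.toTightFilters_surjective ξ
  exact ⟨x, hξ, rfl⟩

theorem isHomeomorph_toTightFilters (hX : IsTightLikeSpace X) :
    IsHomeomorph hX.toTightFilters where
  continuous := hX.continuous_toTightFilters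
  isOpenMap := .of_isCompact_isOpen_image hX.continuous_toTightFilters hX.toTightFilters_injective
    fun x => by
      obtain ⟨U, hc, ho, hu, hx⟩ := hX.exists_mem_upSet x
      refine ⟨U, hc, ?_, hx⟩
      simpa only [hX.image_toTightFilters ⟨U, hc, ho, hu⟩] using
        TightFilters.isOpen_setOf_mem_carrier _
  bijective := ⟨hX.toTightFilters_injective, hX.toTightFilters_surjective⟩

end IsTightLikeSpace

/-- Let `X` be a tight-like space and `𝓔 = KUO X` its semilattice of
compact open up-sets. Then `x ↦ ξ_x = {V ∈ 𝓔 : x ∈ V}` is well defined (each `ξ_x` is a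
tight filter on `𝓔`) and is an order-homeomorphism from `X` onto the tight spectrum of
`𝓔`. In particular, every tight-like space is order-homeomorphic to the tight spectrum
of a semilattice with zero. -/
theorem tightLike_orderHomeo_tightSpectrum {X : Type*} [TopologicalSpace X]
    [PartialOrder X] [T2Space X] (hX : IsTightLikeSpace X) :
    (∀ x : X, IsTightFilter {V : KUO X | x ∈ V.1}) ∧
    ∃ hmap : ∀ x : X, IsTightFilter {V : KUO X | x ∈ V.1},
      IsHomeomorph (fun x : X =>
        (⟨{V : KUO X | x ∈ V.1}, hmap x⟩ : TightFilters (KUO X))) ∧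
      ∀ x y : X, x ≤ y ↔
        (⟨{V : KUO X | x ∈ V.1}, hmap x⟩ : TightFilters (KUO X)) ≤
          ⟨{V : KUO X | y ∈ V.1}, hmap y⟩ :=
  ⟨isTightFilter_pointFilter hX, isTightFilter_pointFilter hX, hX.isHomeomorph_toTightFilters,
    fun _ _ => hX.toTightFilters_le_iff.symm⟩
end
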